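/- Let u ∈ C_c^∞(ℝ^{2n+1}) be a smooth compactly supported function on the Heisenberg group ℍ^n. Then ∫_{ℝ^{2n+1}} ‖∇²_H u‖² dg = ∫_{ℝ^{2n+1}} (Δ_H u)² dg + (3/2) n ∫_{ℝ^{2n+1}} (Tu)² dg, where dg denotes Lebesgue measure. -/

import Mathlib

open scoped BigOperators
noncomputable section

/-- The Heisenberg group ℍⁿ identified with ℝⁿ × ℝⁿ × ℝ, with coordinates (x, y, t). -/
abbrev Heis (n : ℕ) : Type := (Fin n → ℝ) × (Fin n → ℝ) × ℝ

/-- The left-invariant horizontal vector fields `X_1, …, X_{2n}` acting on functions: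
`X_j u = ∂u/∂x_j − (y_j/2) ∂u/∂t` for `j = 1,…,n` (indices `0,…,n-1` here) and
`X_{n+j} u = ∂u/∂y_j + (x_j/2) ∂u/∂t` (indices `n,…,2n-1`). -/
noncomputable def Xf (n : ℕ) (i : Fin (2 * n)) (u : Heis n → ℝ) (p : Heis n) : ℝ :=
  if h : (i : ℕ) < n then
    fderiv ℝ u p (Pi.single ⟨(i : ℕ), h⟩ 1, 0, 0)
      - p.2.1 ⟨(i : ℕ), h⟩ / 2 * fderiv ℝ u p (0, 0, 1)
  else
    fderiv ℝ u p (0, Pi.single ⟨(i : ℕ) - n, by have := i.isLt; omega⟩ 1, 0)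
      + p.1 ⟨(i : ℕ) - n, by have := i.isLt; omega⟩ / 2 * fderiv ℝ u p (0, 0, 1)

/-- The vertical vector field `T u = ∂u/∂t`. -/
noncomputable def Tf (n : ℕ) (u : Heis n → ℝ) (p : Heis n) : ℝ :=
  fderiv ℝ u p (0, 0, 1)

/-- The horizontal Laplacian `Δ_H u = Σ_{i=1}^{2n} X_i (X_i u)`. -/
noncomputable def ΔH (n : ℕ) (u : Heis n → ℝ) (p : Heis n) : ℝ :=
  ∑ i : Fin (2 * n), Xf n i (Xf n i u) p

/-!
The horizontal fields are shear fields `X_i = ∂_{e_i} + c_i(p) ∂_t` with `c_i` linear and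
`c_i(∂_t) = 0`. Hence they are divergence free, so `∫ (X_i f) g = -∫ f (X_i g)` for test functions,
and all their brackets are constant multiples of `T = ∂_t`: `[X_i, X_j] = ε_ij T` with `ε`
antisymmetric and `∑_j ε_ij² = 1`, while `[T, X_i] = 0`.

Write `w_ij = X_i X_j u`. Since `w_ij - w_ji = ε_ij Tu`, pointwise
`∑ ((w_ij + w_ji) / 2)² = ∑ w_ij w_ji + (n / 2) (Tu)²` and `∑ ε_ij w_ij = n Tu`. Integrating by
parts twice, `∫ w_ij w_ji = ∫ w_jj w_ii + ε_ij ∫ w_ij Tu`, which sums to `∫ (Δ_H u)² + n ∫ (Tu)²`.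
-/

open MeasureTheory VectorField
open scoped ContDiff

section TestFunctions

variable {E : Type*} [NormedAddCommGroup E] [NormedSpace ℝ E]

def IsTestFunction (u : E → ℝ) : Prop := ContDiff ℝ ∞ u ∧ HasCompactSupport u

namespace IsTestFunction

variable {u f g : E → ℝ}

lemma contDiff (hu : IsTestFunction u) (k : ℕ) : ContDiff ℝ k u :=
  hu.1.of_le (by exact_mod_cast le_top)

lemma continuous (hu : IsTestFunction u) : Continuous u :=
  hu.1.continuous

lemma integrable_mul [MeasurableSpace E] [OpensMeasurableSpace E] {μ : Measure E}
    [IsFiniteMeasureOnCompacts μ] (hf : IsTestFunction f) (hg : Continuous g) :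
    Integrable (fun p ↦ f p * g p) μ :=
  (hf.continuous.mul hg).integrable_of_hasCompactSupport hf.2.mul_right

end IsTestFunction

end TestFunctions

section VectorFields

variable {E : Type*} [NormedAddCommGroup E] [NormedSpace ℝ E]

namespace VectorField

def lieDeriv (V : E → E) (u : E → ℝ) (p : E) : ℝ := fderiv ℝ u p (V p)

def shearField (a : E) (φ : E →L[ℝ] ℝ) (b : E) (p : E) : E := a + φ p • b

variable {V W : E → E} {u f g : E → ℝ} {p : E}

lemma lieDeriv_mul (hf : DifferentiableAt ℝ f p) (hg : DifferentiableAt ℝ g p) :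
    lieDeriv V (fun q ↦ f q * g q) p = lieDeriv V f p * g p + f p * lieDeriv V g p := by
  simp only [lieDeriv, fderiv_fun_mul hf hg, add_apply, smul_apply, smul_eq_mul]
  ring

lemma lieDeriv_lieDeriv_sub (hu : ContDiffAt ℝ 2 u p) (hV : DifferentiableAt ℝ V p)
    (hW : DifferentiableAt ℝ W p) :
    lieDeriv V (lieDeriv W u) p - lieDeriv W (lieDeriv V u) p = lieDeriv (lieBracket ℝ V W) u p :=
  (fderiv_apply_lieBracket hu (by simp) hW hV).symm

lemma continuous_lieDeriv (hu : ContDiff ℝ 1 u) (hV : Continuous V) :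
    Continuous (lieDeriv V u) :=
  (hu.continuous_fderiv one_ne_zero).clm_apply hV

lemma _root_.HasCompactSupport.lieDeriv (hu : HasCompactSupport u) :
    HasCompactSupport (lieDeriv V u) :=
  (hu.fderiv (𝕜 := ℝ)).mono fun p hp h ↦
    Function.mem_support.1 hp (by simp [VectorField.lieDeriv, h])

lemma _root_.IsTestFunction.lieDeriv (hu : IsTestFunction u) (hV : ContDiff ℝ ∞ V) :
    IsTestFunction (lieDeriv V u) :=
  ⟨(hu.1.fderiv_right (by simp)).clm_apply hV, hu.2.lieDeriv⟩

variable {a b c : E} {φ ψ : E →L[ℝ] ℝ}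

lemma contDiff_shearField : ContDiff ℝ ∞ (shearField a φ b) :=
  contDiff_const.add (φ.contDiff.smul contDiff_const)

lemma fderiv_shearField : fderiv ℝ (shearField a φ b) p = φ.smulRight b :=
  ((hasFDerivAt_const a p).add (φ.hasFDerivAt.smul_const b)).fderiv.trans (by simp)

lemma lieBracket_shearField (hφ : φ b = 0) (hψ : ψ b = 0) :
    lieBracket ℝ (shearField a φ b) (shearField c ψ b) = fun _ ↦ (ψ a - φ c) • b := by
  ext p
  simp [lieBracket, fderiv_shearField, shearField, hφ, hψ, sub_smul]

lemma lieBracket_const_shearField (hφ : φ b = 0) :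
    lieBracket ℝ (fun _ ↦ b) (shearField a φ b) = 0 := by
  ext p
  simp [lieBracket, fderiv_shearField, hφ]

variable [FiniteDimensional ℝ E] [MeasurableSpace E] [BorelSpace E] {μ : Measure E}
  [μ.IsAddHaarMeasure]

lemma integral_fderiv_apply_eq_zero (hu : ContDiff ℝ 1 u) (hc : HasCompactSupport u) (v : E) :
    ∫ p, fderiv ℝ u p v ∂μ = 0 := by
  have := integral_mul_fderiv_eq_neg_fderiv_mul_of_integrable (μ := μ) (f := fun _ ↦ (1 : ℝ))
    (g := u) (v := v) (by simp)
    (by simpa using ((hu.continuous_fderiv one_ne_zero).clm_apply continuous_const)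
      |>.integrable_of_hasCompactSupport (hc.fderiv_apply ℝ v))
    (by simpa using hu.continuous.integrable_of_hasCompactSupport hc)
    (fun _ _ ↦ differentiableAt_const _) (fun p _ ↦ hu.differentiable one_ne_zero p)
  simpa using this

lemma integral_lieDeriv_shearField (hφ : φ b = 0) (hu : ContDiff ℝ 1 u)
    (hc : HasCompactSupport u) : ∫ p, lieDeriv (shearField a φ b) u p ∂μ = 0 := by
  have hφu : ContDiff ℝ 1 (fun q ↦ φ q * u q) := φ.contDiff.mul hu
  have hsplit : lieDeriv (shearField a φ b) u
      = fun p ↦ fderiv ℝ u p a + fderiv ℝ (fun q ↦ φ q * u q) p b := by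
    ext p
    simp [lieDeriv, shearField, hφ,
      fderiv_fun_mul φ.differentiableAt (hu.differentiable one_ne_zero p)]
  rw [hsplit, integral_add, integral_fderiv_apply_eq_zero hu hc,
    integral_fderiv_apply_eq_zero hφu hc.mul_left, add_zero]
  · exact ((hu.continuous_fderiv one_ne_zero).clm_apply continuous_const)
      |>.integrable_of_hasCompactSupport (hc.fderiv_apply ℝ a)
  · exact ((hφu.continuous_fderiv one_ne_zero).clm_apply continuous_const)
      |>.integrable_of_hasCompactSupport (hc.mul_left.fderiv_apply ℝ b)

lemma integral_lieDeriv_shearField_mul (hφ : φ b = 0) (hf : ContDiff ℝ 1 f)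
    (hg : ContDiff ℝ 1 g) (hfc : HasCompactSupport f) :
    ∫ p, lieDeriv (shearField a φ b) f p * g p ∂μ
      = -∫ p, f p * lieDeriv (shearField a φ b) g p ∂μ := by
  have hV : Continuous (shearField a φ b) := contDiff_shearField.continuous
  have h := integral_lieDeriv_shearField (a := a) (μ := μ) hφ (hf.mul hg) hfc.mul_right
  rw [funext fun p ↦ lieDeriv_mul (hf.differentiable one_ne_zero p)
    (hg.differentiable one_ne_zero p), integral_add] at h
  · linarith
  · exact ((continuous_lieDeriv hf hV).mul hg.continuous).integrable_of_hasCompactSupport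
      hfc.lieDeriv.mul_right
  · exact (hf.continuous.mul (continuous_lieDeriv hg hV)).integrable_of_hasCompactSupport
      hfc.mul_right

end VectorField

end VectorFields

lemma MeasureTheory.integral_sum_sum {α ι κ : Type*} [MeasurableSpace α] {μ : Measure α}
    [Fintype ι] [Fintype κ] {f : ι → κ → α → ℝ} (hf : ∀ i j, Integrable (f i j) μ) :
    ∫ a, ∑ i, ∑ j, f i j a ∂μ = ∑ i, ∑ j, ∫ a, f i j a ∂μ := by
  rw [integral_finsetSum _ fun i _ ↦ integrable_finsetSum _ fun j _ ↦ hf i j]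
  exact Fintype.sum_congr _ _ fun i ↦ integral_finsetSum _ fun j _ ↦ hf i j

namespace Heis

variable {n : ℕ}

-- Instance search does not see through `volume` on the nested product.
instance : (volume : Measure (Heis n)).IsAddHaarMeasure :=
  have : (volume : Measure ((Fin n → ℝ) × ℝ)).IsAddHaarMeasure :=
    Measure.prod.instIsAddHaarMeasure _ _
  Measure.prod.instIsAddHaarMeasure _ _

def tUnit (n : ℕ) : Heis n := (0, 0, 1)

def xyUnit (n : ℕ) (i : Fin (2 * n)) : Heis n :=
  if h : (i : ℕ) < n then (Pi.single ⟨i, h⟩ 1, 0, 0)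
  else (0, Pi.single ⟨i - n, by omega⟩ 1, 0)

def tCoeff (n : ℕ) (i : Fin (2 * n)) : Heis n →L[ℝ] ℝ :=
  if h : (i : ℕ) < n then
    -(1 / 2 : ℝ) • (ContinuousLinearMap.proj ⟨i, h⟩).comp
      ((ContinuousLinearMap.fst ℝ _ ℝ).comp (ContinuousLinearMap.snd ℝ (Fin n → ℝ) _))
  else
    (1 / 2 : ℝ) • (ContinuousLinearMap.proj ⟨i - n, by omega⟩).comp
      (ContinuousLinearMap.fst ℝ (Fin n → ℝ) _)

lemma tCoeff_apply (i : Fin (2 * n)) (p : Heis n) :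
    tCoeff n i p =
      if h : (i : ℕ) < n then -p.2.1 ⟨i, h⟩ / 2 else p.1 ⟨i - n, by omega⟩ / 2 := by
  unfold tCoeff
  split_ifs <;> simp <;> ring

lemma tCoeff_tUnit (i : Fin (2 * n)) : tCoeff n i (tUnit n) = 0 := by
  simp [tCoeff_apply, tUnit]

def structConst (n : ℕ) (i j : Fin (2 * n)) : ℝ :=
  tCoeff n j (xyUnit n i) - tCoeff n i (xyUnit n j)

lemma structConst_swap (i j : Fin (2 * n)) : structConst n j i = -structConst n i j := by
  simp only [structConst]; ring

lemma structConst_eq (i j : Fin (2 * n)) :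
    structConst n i j =
      (if (i : ℕ) + n = j then 1 else 0) - (if (j : ℕ) + n = i then 1 else 0) := by
  have := i.isLt; have := j.isLt
  simp only [structConst, tCoeff_apply, xyUnit]
  split_ifs <;> simp only [Pi.single_apply, Fin.ext_iff, Pi.zero_apply] <;> (try split_ifs) <;>
    first | omega | norm_num

lemma sum_structConst_sq (i : Fin (2 * n)) : ∑ j, structConst n i j ^ 2 = 1 := by
  have := i.isLt
  rw [Finset.sum_eq_single ⟨if (i : ℕ) < n then i + n else i - n, by split_ifs <;> omega⟩]
  · simp only [structConst_eq]
    split_ifs <;> first | omega | norm_num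
  · intro j _ hj
    simp only [structConst_eq]
    split_ifs at hj ⊢ <;> simp only [Ne, Fin.ext_iff] at hj <;> first | omega | norm_num
  · simp

lemma sum_sum_structConst_sq : ∑ i, ∑ j, structConst n i j ^ 2 = 2 * n := by
  simp [sum_structConst_sq]

def horizontalField (n : ℕ) (i : Fin (2 * n)) : Heis n → Heis n :=
  shearField (xyUnit n i) (tCoeff n i) (tUnit n)

variable {u f g : Heis n → ℝ}

lemma Xf_eq_lieDeriv (i : Fin (2 * n)) (u : Heis n → ℝ) :
    Xf n i u = lieDeriv (horizontalField n i) u := by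
  ext p
  simp only [Xf, lieDeriv, horizontalField, shearField, map_add, map_smul, smul_eq_mul,
    tCoeff_apply, xyUnit, tUnit]
  split_ifs <;> ring

lemma Tf_eq_lieDeriv (u : Heis n → ℝ) : Tf n u = lieDeriv (fun _ ↦ tUnit n) u := rfl

lemma Xf_Xf_sub (hu : ContDiff ℝ 2 u) (i j : Fin (2 * n)) (p : Heis n) :
    Xf n i (Xf n j u) p - Xf n j (Xf n i u) p = structConst n i j * Tf n u p := by
  have hV (k : Fin (2 * n)) : DifferentiableAt ℝ (horizontalField n k) p :=
    contDiff_shearField.differentiable (by simp) p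
  simp only [Xf_eq_lieDeriv]
  rw [lieDeriv_lieDeriv_sub hu.contDiffAt (hV i) (hV j), horizontalField, horizontalField,
    lieBracket_shearField (tCoeff_tUnit i) (tCoeff_tUnit j)]
  simp only [lieDeriv, map_smul, smul_eq_mul]
  rfl

lemma Tf_Xf (hu : ContDiff ℝ 2 u) (i : Fin (2 * n)) (p : Heis n) :
    Tf n (Xf n i u) p = Xf n i (Tf n u) p := by
  have h := lieDeriv_lieDeriv_sub (V := fun _ ↦ tUnit n) (W := horizontalField n i) hu.contDiffAt
    (differentiableAt_const _) (contDiff_shearField.differentiable (by simp) p)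
  rw [horizontalField, lieBracket_const_shearField (tCoeff_tUnit i)] at h
  simp only [Xf_eq_lieDeriv, Tf_eq_lieDeriv, horizontalField]
  simpa [lieDeriv, sub_eq_zero] using h

lemma _root_.IsTestFunction.Xf (hu : IsTestFunction u) (i : Fin (2 * n)) :
    IsTestFunction (Xf n i u) :=
  Xf_eq_lieDeriv i u ▸ hu.lieDeriv contDiff_shearField

lemma _root_.IsTestFunction.Tf (hu : IsTestFunction u) : IsTestFunction (Tf n u) :=
  hu.lieDeriv contDiff_const

lemma integral_Xf_mul (hf : IsTestFunction f) (hg : IsTestFunction g) (i : Fin (2 * n)) :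
    ∫ p, Xf n i f p * g p = -∫ p, f p * Xf n i g p := by
  simp only [Xf_eq_lieDeriv]
  exact integral_lieDeriv_shearField_mul (tCoeff_tUnit i) (hf.contDiff 1) (hg.contDiff 1) hf.2

lemma sum_structConst_mul_Xf_Xf (hu : ContDiff ℝ 2 u) (p : Heis n) :
    ∑ i, ∑ j, structConst n i j * Xf n i (Xf n j u) p = n * Tf n u p := by
  have hswap : ∑ i, ∑ j, structConst n i j * Xf n j (Xf n i u) p
      = -∑ i, ∑ j, structConst n i j * Xf n i (Xf n j u) p := by
    rw [Finset.sum_comm]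
    simp only [← Finset.sum_neg_distrib]
    refine Fintype.sum_congr _ _ fun i ↦ Fintype.sum_congr _ _ fun j ↦ ?_
    rw [structConst_swap, neg_mul]
  have hcomm (i j : Fin (2 * n)) : structConst n i j * Xf n i (Xf n j u) p
      = structConst n i j * Xf n j (Xf n i u) p + structConst n i j ^ 2 * Tf n u p := by
    linear_combination structConst n i j * Xf_Xf_sub hu i j p
  have hexpand : ∑ i, ∑ j, structConst n i j * Xf n i (Xf n j u) p
      = ∑ i, ∑ j, structConst n i j * Xf n j (Xf n i u) p + 2 * n * Tf n u p := by
    simp only [hcomm, Finset.sum_add_distrib, ← Finset.sum_mul, sum_sum_structConst_sq]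
  linarith

lemma sum_sq_symm_Xf_Xf (hu : ContDiff ℝ 2 u) (p : Heis n) :
    ∑ i, ∑ j, ((Xf n i (Xf n j u) p + Xf n j (Xf n i u) p) / 2) ^ 2
      = ∑ i, ∑ j, Xf n i (Xf n j u) p * Xf n j (Xf n i u) p + n / 2 * Tf n u p ^ 2 := by
  have h (i j : Fin (2 * n)) : ((Xf n i (Xf n j u) p + Xf n j (Xf n i u) p) / 2) ^ 2
      = Xf n i (Xf n j u) p * Xf n j (Xf n i u) p + structConst n i j ^ 2 * Tf n u p ^ 2 / 4 := by
    linear_combination (Xf n i (Xf n j u) p - Xf n j (Xf n i u) p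
      + structConst n i j * Tf n u p) / 4 * Xf_Xf_sub hu i j p
  simp only [h, Finset.sum_add_distrib, ← Finset.sum_div, ← Finset.sum_mul,
    sum_sum_structConst_sq]
  ring

lemma integral_Xf_Xf_mul_swap (hu : IsTestFunction u) (i j : Fin (2 * n)) :
    ∫ p, Xf n i (Xf n j u) p * Xf n j (Xf n i u) p
      = (∫ p, Xf n j (Xf n j u) p * Xf n i (Xf n i u) p)
        + structConst n i j * ∫ p, Xf n i (Xf n j u) p * Tf n u p := by
  have hXj := hu.Xf j
  have hpt (p : Heis n) : Xf n j u p * Xf n i (Xf n j (Xf n i u)) p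
      = Xf n j u p * Xf n j (Xf n i (Xf n i u)) p
        + structConst n i j * (Xf n j u p * Xf n i (Tf n u) p) := by
    linear_combination Xf n j u p * (Xf_Xf_sub ((hu.Xf i).contDiff 2) i j p
      + structConst n i j * Tf_Xf (hu.contDiff 2) i p)
  have hsplit : ∫ p, Xf n j u p * Xf n i (Xf n j (Xf n i u)) p
      = (∫ p, Xf n j u p * Xf n j (Xf n i (Xf n i u)) p)
        + structConst n i j * ∫ p, Xf n j u p * Xf n i (Tf n u) p := by
    rw [funext hpt, integral_add (hXj.integrable_mul (((hu.Xf i).Xf i).Xf j).continuous)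
      ((hXj.integrable_mul (hu.Tf.Xf i).continuous).const_mul _), integral_const_mul]
  rw [integral_Xf_mul hXj ((hu.Xf i).Xf j), hsplit, integral_Xf_mul hXj ((hu.Xf i).Xf i),
    integral_Xf_mul hXj hu.Tf]
  ring

lemma sum_integral_Xf_Xf_mul_swap (hu : IsTestFunction u) :
    ∑ i, ∑ j, ∫ p, Xf n i (Xf n j u) p * Xf n j (Xf n i u) p
      = (∫ p, ΔH n u p ^ 2) + n * ∫ p, Tf n u p ^ 2 := by
  have hw (i j : Fin (2 * n)) : IsTestFunction (Xf n i (Xf n j u)) := (hu.Xf j).Xf i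
  have hLaplacian :
      ∫ p, ΔH n u p ^ 2 = ∑ i, ∑ j, ∫ p, Xf n j (Xf n j u) p * Xf n i (Xf n i u) p := by
    rw [← integral_sum_sum fun i j ↦ (hw j j).integrable_mul (hw i i).continuous]
    congr 1 with p
    rw [ΔH, sq, Finset.sum_mul_sum, Finset.sum_comm]
  have hT : ∑ i, ∑ j, structConst n i j * ∫ p, Xf n i (Xf n j u) p * Tf n u p
      = n * ∫ p, Tf n u p ^ 2 := by
    simp only [← integral_const_mul]
    rw [← integral_sum_sum fun i j ↦ ((hw i j).integrable_mul hu.Tf.continuous).const_mul _]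
    congr 1 with p
    simp only [← mul_assoc, ← Finset.sum_mul, sum_structConst_mul_Xf_Xf (hu.contDiff 2)]
    ring
  simp only [integral_Xf_Xf_mul_swap hu, Finset.sum_add_distrib, hLaplacian, hT]

end Heis

open Heis

/-- For u ∈ C_c^∞(ℍⁿ):
∫ ‖∇²_H u‖² = ∫ (Δ_H u)² + (3/2) n ∫ (Tu)². -/
theorem heisenberg_global_hessian_identity (n : ℕ) (u : Heis n → ℝ)
    (hu : ContDiff ℝ (⊤ : ℕ∞) u) (hc : HasCompactSupport u) :
    ∫ p : Heis n, ∑ i : Fin (2 * n), ∑ j : Fin (2 * n),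
        ((Xf n i (Xf n j u) p + Xf n j (Xf n i u) p) / 2) ^ 2
      = (∫ p : Heis n, (ΔH n u p) ^ 2)
        + (3 / 2) * n * ∫ p : Heis n, (Tf n u p) ^ 2 := by
  have hu' : IsTestFunction u := ⟨hu, hc⟩
  have hw (i j : Fin (2 * n)) : IsTestFunction (Xf n i (Xf n j u)) := (hu'.Xf j).Xf i
  calc _ = ∫ p, (∑ i, ∑ j, Xf n i (Xf n j u) p * Xf n j (Xf n i u) p
          + n / 2 * Tf n u p ^ 2) :=
        integral_congr_ae (.of_forall fun p ↦ sum_sq_symm_Xf_Xf (hu'.contDiff 2) p)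
    _ = ∑ i, ∑ j, (∫ p, Xf n i (Xf n j u) p * Xf n j (Xf n i u) p)
          + n / 2 * ∫ p, Tf n u p ^ 2 := by
        rw [integral_add, integral_sum_sum, integral_const_mul]
        · exact fun i j ↦ (hw i j).integrable_mul (hw j i).continuous
        · exact integrable_finsetSum _ fun i _ ↦ integrable_finsetSum _ fun j _ ↦
            (hw i j).integrable_mul (hw j i).continuous
        · simpa only [sq] using (hu'.Tf.integrable_mul hu'.Tf.continuous).const_mul _
    _ = _ := by
        rw [sum_integral_Xf_Xf_mul_swap hu']
        ring
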